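/- Let {aᵢ ⊗ bᵢ : i = 1…d} be an orthonormal product basis of ℂ^{d₁} ⊗ ℂ^{d₂}, d = d₁d₂, and let κ, λ ∈ {1…d} be two indices with κ ≠ λ and ⟨b_κ, b_λ⟩ ≠ 0 (so that necessarily ⟨a_κ, a_λ⟩ = 0). Then the set of vectors {a_κ, a_λ} ∪ {aᵢ : i ≠ κ, i ≠ λ, ⟨b_κ, bᵢ⟩⟨b_λ, bᵢ⟩ ≠ 0} spans ℂ^{d₁}. In particular, the set I_{κλ} = {i ≠ κ, λ : ⟨b_κ, bᵢ⟩⟨b_λ, bᵢ⟩ ≠ 0} contains at least d₁ − 2 elements, and for each i ∈ I_{κλ} the vector aᵢ is orthogonal to both a_κ and a_λ. -/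

import Mathlib

/-!
If `v` is orthogonal to every `aᵢ` with `⟨x, bᵢ⟩⟨y, bᵢ⟩ ≠ 0`, then every term of the Parseval
expansion of `⟨v ⊗ x, v ⊗ y⟩` in the basis `aᵢ ⊗ bᵢ` vanishes, so `‖v‖² ⟨x, y⟩ = 0`. With
`x = b_κ`, `y = b_λ` this shows that `a_κ`, `a_λ` and the `aᵢ`, `i ∈ I_{κλ}`, span `ℂ^{d₁}`, and
counting vectors gives `d₁ ≤ |I_{κλ}| + 2`. The orthogonality claims come from
`⟨aᵢ, aⱼ⟩⟨bᵢ, bⱼ⟩ = 0` for `i ≠ j`.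
-/

open scoped ComplexInnerProductSpace

/-- The tensor product of two vectors, realized concretely on `EuclideanSpace`:
`(a ⊗ b) (i, j) = a i * b j`. -/
noncomputable def eprod {ι γ : Type*} (a : EuclideanSpace ℂ ι) (b : EuclideanSpace ℂ γ) :
    EuclideanSpace ℂ (ι × γ) :=
  WithLp.toLp 2 (fun p : ι × γ => a p.1 * b p.2)

open scoped InnerProductSpace

theorem Orthonormal.sum_inner_mul_inner_of_card_eq_finrank {𝕜 E ι : Type*} [RCLike 𝕜]
    [NormedAddCommGroup E] [InnerProductSpace 𝕜 E] [FiniteDimensional 𝕜 E] [Fintype ι]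
    {v : ι → E} (hv : Orthonormal 𝕜 v) (hcard : Fintype.card ι = Module.finrank 𝕜 E)
    (x y : E) : ∑ i, ⟪x, v i⟫_𝕜 * ⟪v i, y⟫_𝕜 = ⟪x, y⟫_𝕜 := by
  simpa using (OrthonormalBasis.mk hv
    (hv.linearIndependent.span_eq_top_of_card_eq_finrank' hcard).ge).sum_inner_mul_inner x y

theorem Module.finrank_le_ncard_of_span_eq_top {R M : Type*} [Ring R] [StrongRankCondition R]
    [AddCommGroup M] [Module R M] {t : Set M} (ht : t.Finite) (hspan : Submodule.span R t = ⊤) :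
    Module.finrank R M ≤ t.ncard := by
  have := ht.fintype
  rw [← finrank_top R M, ← hspan, Set.ncard_eq_toFinset_card']
  exact finrank_span_le_card t

theorem Set.ncard_insert_insert_image_le {α β : Type*} (x y : β) (f : α → β) {s : Set α}
    (hs : s.Finite) : (insert x (insert y (f '' s))).ncard ≤ s.ncard + 2 := by
  have h₁ := ncard_insert_le x (insert y (f '' s))
  have h₂ := ncard_insert_le y (f '' s)
  have h₃ := ncard_image_le (f := f) hs
  omega

section ProductBasis

variable {ι γ ν : Type*} [Fintype ι] [Fintype γ]

theorem inner_eprod_eprod (a c : EuclideanSpace ℂ ι) (b d : EuclideanSpace ℂ γ) :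
    ⟪eprod a b, eprod c d⟫ = ⟪a, c⟫ * ⟪b, d⟫ := by
  simp only [eprod, PiLp.inner_apply, RCLike.inner_apply, map_mul,
    Fintype.sum_prod_type, Finset.sum_mul, Finset.mul_sum]
  rw [Finset.sum_comm]
  exact Finset.sum_congr rfl fun i _ => Finset.sum_congr rfl fun j _ => by ring

variable {a : ν → EuclideanSpace ℂ ι} {b : ν → EuclideanSpace ℂ γ}

theorem Orthonormal.inner_eq_zero_of_eprod (hB : Orthonormal ℂ fun i => eprod (a i) (b i))
    {i j : ν} (hij : i ≠ j) (hb : ⟪b i, b j⟫ ≠ 0) : ⟪a i, a j⟫ = 0 :=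
  (mul_eq_zero.mp <| (inner_eprod_eprod _ _ _ _).symm.trans (hB.2 hij)).resolve_right hb

theorem Orthonormal.span_image_eq_top_of_eprod [Fintype ν]
    (hB : Orthonormal ℂ fun i => eprod (a i) (b i))
    (hcard : Fintype.card ν = Fintype.card ι * Fintype.card γ)
    {x y : EuclideanSpace ℂ γ} (hxy : ⟪x, y⟫ ≠ 0) :
    Submodule.span ℂ (a '' {i | ⟪x, b i⟫ * ⟪y, b i⟫ ≠ 0}) = ⊤ := by
  rw [← Submodule.orthogonal_eq_bot_iff, Submodule.eq_bot_iff]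
  intro v hv
  have hva : ∀ i, ⟪x, b i⟫ * ⟪y, b i⟫ ≠ 0 → ⟪a i, v⟫ = 0 := fun i hi =>
    hv _ (Submodule.subset_span ⟨i, hi, rfl⟩)
  have hparseval : ⟪v, v⟫ * ⟪x, y⟫ = 0 := by
    rw [← inner_eprod_eprod, ← hB.sum_inner_mul_inner_of_card_eq_finrank (by simp [hcard])]
    refine Finset.sum_eq_zero fun i _ => ?_
    simp only [inner_eprod_eprod]
    by_cases hi : ⟪x, b i⟫ * ⟪y, b i⟫ = 0
    · rcases mul_eq_zero.mp hi with h | h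
      · simp [h]
      · simp [inner_eq_zero_symm.mp h]
    · simp [hva i hi]
  exact inner_self_eq_zero.mp ((mul_eq_zero.mp hparseval).resolve_right hxy)

end ProductBasis

theorem product_basis_first_factor_span_two_general {d₁ d₂ : ℕ}
    (a : Fin (d₁ * d₂) → EuclideanSpace ℂ (Fin d₁))
    (b : Fin (d₁ * d₂) → EuclideanSpace ℂ (Fin d₂))
    (hB : Orthonormal ℂ (fun i => eprod (a i) (b i)))
    (κ l : Fin (d₁ * d₂)) (hκl : κ ≠ l) (hbκl : ⟪b κ, b l⟫ ≠ 0) :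
    ⟪a κ, a l⟫ = 0 ∧
    Submodule.span ℂ
      (insert (a κ) (insert (a l)
        (a '' {i | i ≠ κ ∧ i ≠ l ∧ ⟪b κ, b i⟫ * ⟪b l, b i⟫ ≠ 0}))) = ⊤ ∧
    d₁ - 2 ≤ {i | i ≠ κ ∧ i ≠ l ∧ ⟪b κ, b i⟫ * ⟪b l, b i⟫ ≠ 0}.ncard ∧
    ∀ i, i ≠ κ → i ≠ l → ⟪b κ, b i⟫ * ⟪b l, b i⟫ ≠ 0 →
      ⟪a κ, a i⟫ = 0 ∧ ⟪a l, a i⟫ = 0 := by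
  set I := {i | i ≠ κ ∧ i ≠ l ∧ ⟪b κ, b i⟫ * ⟪b l, b i⟫ ≠ 0}
  have hspan : Submodule.span ℂ (insert (a κ) (insert (a l) (a '' I))) = ⊤ := by
    refine eq_top_mono (Submodule.span_mono ?_) (hB.span_image_eq_top_of_eprod (by simp) hbκl)
    rintro _ ⟨i, hi, rfl⟩
    rcases eq_or_ne i κ with rfl | hiκ
    · exact Set.mem_insert _ _
    rcases eq_or_ne i l with rfl | hil
    · exact Set.mem_insert_of_mem _ (Set.mem_insert _ _)
    · exact Set.mem_insert_of_mem _ (Set.mem_insert_of_mem _ ⟨i, ⟨hiκ, hil, hi⟩, rfl⟩)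
  have hcount : d₁ ≤ I.ncard + 2 := by
    have hS := Module.finrank_le_ncard_of_span_eq_top
      (((I.toFinite.image a).insert _).insert _) hspan
    rw [finrank_euclideanSpace_fin] at hS
    exact hS.trans (Set.ncard_insert_insert_image_le _ _ _ I.toFinite)
  refine ⟨hB.inner_eq_zero_of_eprod hκl hbκl, hspan, by omega, fun i hiκ hil hi => ?_⟩
  exact ⟨hB.inner_eq_zero_of_eprod hiκ.symm (left_ne_zero_of_mul hi),
    hB.inner_eq_zero_of_eprod hil.symm (right_ne_zero_of_mul hi)⟩

/-- For an orthonormal product basis `{aᵢ ⊗ bᵢ : i = 1…d}` of `ℂ^{d₁} ⊗ ℂ^{d₂}` and two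
indices `κ ≠ λ` with `⟨b_κ, b_λ⟩ ≠ 0` (so that `⟨a_κ, a_λ⟩ = 0`), the set
`{a_κ, a_λ} ∪ {aᵢ : i ≠ κ, λ, ⟨b_κ, bᵢ⟩⟨b_λ, bᵢ⟩ ≠ 0}` spans `ℂ^{d₁}`; in particular the
index set `I_{κλ}` has at least `d₁ - 2` elements and each `aᵢ` with `i ∈ I_{κλ}` is
orthogonal to both `a_κ` and `a_λ`. -/
theorem product_basis_first_factor_span_two {d₁ d₂ : ℕ} (hd₁ : 0 < d₁) (hd₂ : 0 < d₂)
    (a : Fin (d₁ * d₂) → EuclideanSpace ℂ (Fin d₁))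
    (b : Fin (d₁ * d₂) → EuclideanSpace ℂ (Fin d₂))
    (ha : ∀ i, ‖a i‖ = 1) (hb : ∀ i, ‖b i‖ = 1)
    (hB : Orthonormal ℂ (fun i => eprod (a i) (b i)))
    (κ l : Fin (d₁ * d₂)) (hκl : κ ≠ l) (hbκl : ⟪b κ, b l⟫ ≠ 0) :
    ⟪a κ, a l⟫ = 0 ∧
    Submodule.span ℂ
      (insert (a κ) (insert (a l)
        (a '' {i | i ≠ κ ∧ i ≠ l ∧ ⟪b κ, b i⟫ * ⟪b l, b i⟫ ≠ 0}))) = ⊤ ∧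
    d₁ - 2 ≤ {i | i ≠ κ ∧ i ≠ l ∧ ⟪b κ, b i⟫ * ⟪b l, b i⟫ ≠ 0}.ncard ∧
    ∀ i, i ≠ κ → i ≠ l → ⟪b κ, b i⟫ * ⟪b l, b i⟫ ≠ 0 →
      ⟪a κ, a i⟫ = 0 ∧ ⟪a l, a i⟫ = 0 :=
  product_basis_first_factor_span_two_general a b hB κ l hκl hbκl
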